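/- arXiv:0810.4705 — 4 statements merged into one kernel-verified Lean document; each statement's English description precedes it below -/
import Mathlib

section
/- If an ordered set A is iteratively algebraic, then every element of A is compact, i.e. A = K(A). -/
universe u

/-- A subset is directed if every finite subset has an upper bound in it. -/
def IsDirectedSet {α : Type u} [PartialOrder α] (X : Set α) : Prop :=
  ∀ F : Finset α, ↑F ⊆ X → ∃ z ∈ X, ∀ x ∈ F, x ≤ z

/-- An element is compact if whenever it is below the supremum of a directed set,
it is below some member of the set. -/
def IsCompactElem {α : Type u} [PartialOrder α] (k : α) : Prop :=
  ∀ X : Set α, IsDirectedSet X → ∀ s : α, IsLUB X s → k ≤ s → ∃ x ∈ X, k ≤ x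

/-- An ordered set is upwards complete if every directed subset has a supremum. -/
def UpwardsComplete (α : Type u) [PartialOrder α] : Prop :=
  ∀ X : Set α, IsDirectedSet X → ∃ s : α, IsLUB X s

/-- An ordered set is algebraic if it is upwards complete and every element is the
supremum of the directed set of compact elements below it. -/
def IsAlgebraicOrder (α : Type u) [PartialOrder α] : Prop :=
  UpwardsComplete α ∧ ∀ x : α,
    IsDirectedSet {k : α | IsCompactElem k ∧ k ≤ x} ∧
    IsLUB {k : α | IsCompactElem k ∧ k ≤ x} x

/-- The iterated poset of compact elements: `KIter α inst n` is `Kⁿ(α)` with its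
induced partial order. -/
def KIter (α : Type u) (inst : PartialOrder α) : ℕ → (β : Type u) × PartialOrder β
  | 0 => ⟨α, inst⟩
  | n + 1 =>
    let p := KIter α inst n
    ⟨{x : p.1 // @IsCompactElem p.1 p.2 x}, @Subtype.partialOrder p.1 p.2 _⟩

/-- An ordered set is iteratively algebraic if `Kⁿ(α)` is algebraic for all `n`. -/
def IterativelyAlgebraic (α : Type u) (inst : PartialOrder α) : Prop :=
  ∀ n : ℕ, @IsAlgebraicOrder (KIter α inst n).1 (KIter α inst n).2

/-!
Suppose `x` is not compact. Starting from `t₀ = x`, repeatedly replace `tₙ ∈ Kⁿ(A)` by the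
supremum `tₙ₊₁ ∈ Kⁿ⁺¹(A)` of the compact elements of `Kⁿ(A)` below it; algebraicity of `Kⁿ(A)`
gives `tₙ ≤ tₙ₊₁`, and by induction the compact elements of `Kⁿ(A)` below `tₙ` are exactly those
below `x` in `A`. If the chain `(tₙ)` ever stopped growing, `x` would equal some `tₙ₊₁` and be
compact. Hence its supremum in `A` lies strictly above `x`, and it is not compact, since a compact
supremum of a directed set belongs to it. So no non-compact element is maximal among the
non-compact ones, and Zorn's lemma rules out non-compact elements altogether.
-/

section Compact

variable {β : Type u} [PartialOrder β]

theorem isDirectedSet_of_directedOn {X : Set β} (hne : X.Nonempty)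
    (hd : DirectedOn (· ≤ ·) X) : IsDirectedSet X := by
  classical
  intro F
  induction F using Finset.induction_on with
  | empty =>
    obtain ⟨z, hz⟩ := hne
    exact fun _ => ⟨z, hz, by simp⟩
  | insert a F _ ih =>
    intro hF
    rw [Finset.coe_insert, Set.insert_subset_iff] at hF
    obtain ⟨z, hzX, hz⟩ := ih hF.2
    obtain ⟨u, huX, hau, hzu⟩ := hd a hF.1 z hzX
    exact ⟨u, huX, Finset.forall_mem_insert _ _ _ |>.2 ⟨hau, fun y hy => (hz y hy).trans hzu⟩⟩

theorem IsChain.isDirectedSet {X : Set β} (hc : IsChain (· ≤ ·) X) (hne : X.Nonempty) :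
    IsDirectedSet X :=
  isDirectedSet_of_directedOn hne hc.directedOn

theorem Monotone.isDirectedSet_range {a : ℕ → β} (ha : Monotone a) :
    IsDirectedSet (Set.range a) :=
  isDirectedSet_of_directedOn (Set.range_nonempty a) (directedOn_range.2 ha.directed_le)

theorem IsDirectedSet.subtype_val_le {p : β → Prop} {s : β}
    (hd : IsDirectedSet {k | p k ∧ k ≤ s}) : IsDirectedSet {k : Subtype p | k.1 ≤ s} := by
  classical
  intro F hF
  have hsub : ↑(F.image Subtype.val) ⊆ {k | p k ∧ k ≤ s} := by
    intro y hy
    obtain ⟨k, hk, rfl⟩ := Finset.mem_image.1 (Finset.mem_coe.1 hy)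
    exact ⟨k.2, hF hk⟩
  obtain ⟨z, hz, hub⟩ := hd (F.image Subtype.val) hsub
  exact ⟨⟨z, hz.1⟩, hz.2, fun k hk => hub k.1 (Finset.mem_image_of_mem _ hk)⟩

theorem IsCompactElem.mem_of_isLUB {X : Set β} {s : β} (hs : IsCompactElem s)
    (hd : IsDirectedSet X) (hX : IsLUB X s) : s ∈ X := by
  obtain ⟨x, hx, hsx⟩ := hs X hd s hX le_rfl
  rwa [le_antisymm hsx (hX.1 hx)]

theorem not_isCompactElem_of_isLUB {X : Set β} {s : β} (hX : ∀ x ∈ X, ¬ IsCompactElem x)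
    (hd : IsDirectedSet X) (hs : IsLUB X s) : ¬ IsCompactElem s :=
  fun hsc => hX s (hsc.mem_of_isLUB hd hs) hsc

theorem forall_isCompactElem_of_exists_gt (hβ : UpwardsComplete β)
    (hgt : ∀ x : β, ¬ IsCompactElem x → ∃ w, ¬ IsCompactElem w ∧ x < w) :
    ∀ a : β, IsCompactElem a := by
  by_contra! ⟨a, ha⟩
  obtain ⟨m, -, hm⟩ := zorn_le_nonempty₀ {y : β | ¬ IsCompactElem y}
    (fun c hcX hc y hy =>
      have hd := hc.isDirectedSet ⟨y, hy⟩
      have ⟨s, hs⟩ := hβ c hd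
      ⟨s, not_isCompactElem_of_isLUB hcX hd hs, hs.1⟩) a ha
  obtain ⟨w, hw, hmw⟩ := hgt m hm.1
  exact hmw.not_ge (hm.2 hw hmw.le)

theorem exists_compact_ge_with_same_compacts_below
    (hK : UpwardsComplete {y : β // IsCompactElem y}) {s : β}
    (hd : IsDirectedSet {k | IsCompactElem k ∧ k ≤ s})
    (hs : IsLUB {k | IsCompactElem k ∧ k ≤ s} s) :
    ∃ t : {y : β // IsCompactElem y}, s ≤ t.1 ∧
      ∀ k : {y : β // IsCompactElem y}, IsCompactElem k → (k ≤ t ↔ k.1 ≤ s) := by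
  have hd' := hd.subtype_val_le
  obtain ⟨t, ht⟩ := hK _ hd'
  refine ⟨t, hs.2 fun k hk => mem_upperBounds.1 ht.1 ⟨k, hk.1⟩ hk.2,
    fun k hk => ⟨fun hkt => ?_, fun hks => ht.1 hks⟩⟩
  obtain ⟨j, hj, hkj⟩ := hk _ hd' t ht hkt
  exact (Subtype.coe_le_coe.2 hkj).trans hj

end Compact

namespace KIter

variable {α : Type u} {inst : PartialOrder α}

instance instPartialOrder (n : ℕ) : PartialOrder (KIter α inst n).1 := (KIter α inst n).2

def embedding : (n : ℕ) → (KIter α inst n).1 ↪o α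
  | 0 => RelEmbedding.refl _
  | n + 1 => (OrderEmbedding.subtype _).trans (embedding n)

theorem isCompactElem_embedding_succ : ∀ (n : ℕ) (t : (KIter α inst (n + 1)).1),
    IsCompactElem (embedding (n + 1) t)
  | 0, t => t.2
  | n + 1, t => isCompactElem_embedding_succ n t.1

theorem exists_ge_with_compacts_below (h : IterativelyAlgebraic α inst) (x : α) (n : ℕ) :
    ∃ t : (KIter α inst n).1, x ≤ embedding n t ∧
      ∀ k : (KIter α inst n).1, IsCompactElem k → (k ≤ t ↔ embedding n k ≤ x) := by
  induction n with
  | zero => exact ⟨x, le_rfl, fun _ _ => Iff.rfl⟩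
  | succ n ih =>
    obtain ⟨t, hxt, ht⟩ := ih
    obtain ⟨t', htt', ht'⟩ :=
      exists_compact_ge_with_same_compacts_below (h (n + 1)).1 ((h n).2 t).1 ((h n).2 t).2
    exact ⟨t', hxt.trans ((embedding n).monotone htt'),
      fun k hk => (ht' k hk).trans (ht k.1 k.2)⟩

theorem exists_not_isCompactElem_gt (h : IterativelyAlgebraic α inst) {x : α}
    (hx : ¬ IsCompactElem x) : ∃ w, ¬ IsCompactElem w ∧ x < w := by
  choose t hxt ht using exists_ge_with_compacts_below h x
  set a : ℕ → α := fun n => embedding n (t n)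
  have hmono : Monotone a := monotone_nat_of_le_succ fun n =>
    (embedding n).monotone <| ((h n).2 (t n)).2.2 fun k hk =>
      (embedding n).le_iff_le.1 (((ht n k hk.1).1 hk.2).trans (hxt (n + 1)))
  have hgrow : ∀ n, ¬ a (n + 1) ≤ a n := by
    intro n hle
    have hle_x : a (n + 1) ≤ x :=
      (ht n (t (n + 1)).1 (t (n + 1)).2).1 ((embedding n).le_iff_le.1 hle)
    exact hx (le_antisymm (hxt (n + 1)) hle_x ▸ isCompactElem_embedding_succ n (t (n + 1)))
  obtain ⟨w, hw⟩ := (h 0).1 _ hmono.isDirectedSet_range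
  refine ⟨w, fun hwc => ?_, lt_of_le_not_ge ((hxt 0).trans (hw.1 ⟨0, rfl⟩))
    fun hwx => hgrow 0 ((hw.1 ⟨1, rfl⟩).trans (hwx.trans (hxt 0)))⟩
  obtain ⟨n, rfl⟩ := hwc.mem_of_isLUB hmono.isDirectedSet_range hw
  exact hgrow n (hw.1 ⟨n + 1, rfl⟩)

end KIter

/-- If an ordered set is iteratively algebraic, every element is compact. -/
theorem iterativelyAlgebraic_all_compact {α : Type u} [inst : PartialOrder α]
    (h : IterativelyAlgebraic α inst) : ∀ a : α, IsCompactElem a :=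
  forall_isCompactElem_of_exists_gt (h 0).1 fun _ => KIter.exists_not_isCompactElem_gt h
end

section
/- If an ordered set A is iteratively algebraic, then A satisfies the ascending chain condition: there is no strictly increasing sequence x₀ < x₁ < x₂ < … in A. -/
universe u

/-!
Every element of an iteratively algebraic order is compact, which gives the ascending chain
condition at once: the supremum of a strictly increasing sequence would be compact, hence below
some term. If `a` is not compact in an algebraic `γ`, the supremum `b` in `K(γ)` of the compact
elements below `a` lies strictly above `a`, and `b` is not compact in `K(γ)` since it is the
supremum of a directed set it does not lie below. Hence the non-compact elements of all the
`Kⁿ(α)`, viewed in `α`, have no maximal element; but by upwards completeness of `α` every chain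
of them is bounded by one of them, contradicting Zorn's lemma.
-/

section

variable {γ : Type u} [PartialOrder γ]

theorem IsDirectedSet.of_directedOn {X : Set γ} (hne : X.Nonempty)
    (hX : DirectedOn (· ≤ ·) X) : IsDirectedSet X := by
  classical
  intro F hF
  have : Nonempty X := hne.to_subtype
  obtain ⟨z, hz⟩ := (directedOn_iff_directed.1 hX).finset_le (F.subtype (· ∈ X))
  exact ⟨z, z.2, fun x hx => hz ⟨x, hF hx⟩ (Finset.mem_subtype.2 hx)⟩

theorem IsDirectedSet.preimage_val {p : γ → Prop} {X : Set γ}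
    (hX : IsDirectedSet X) (hXp : ∀ x ∈ X, p x) :
    IsDirectedSet (Subtype.val ⁻¹' X : Set {x // p x}) := by
  classical
  intro F hF
  obtain ⟨z, hzX, hz⟩ := hX (F.image Subtype.val) (by simpa [Set.subset_def] using hF)
  exact ⟨⟨z, hXp z hzX⟩, hzX, fun x hx => hz x (Finset.mem_image_of_mem _ hx)⟩

theorem not_isCompactElem_of_isLUB_s1 {D : Set γ} {s : γ}
    (hD : IsDirectedSet D) (hs : IsLUB D s) (hsD : ∀ d ∈ D, ¬ s ≤ d) : ¬ IsCompactElem s :=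
  fun hc => by
    obtain ⟨d, hd, hsd⟩ := hc D hD s hs le_rfl
    exact hsD d hd hsd

theorem UpwardsComplete.exists_upperBound_of_isChain
    (hγ : UpwardsComplete γ) {C : Set γ} (hne : C.Nonempty) (hC : IsChain (· ≤ ·) C) :
    ∃ u ∈ upperBounds C, u ∈ C ∨ ¬ IsCompactElem u := by
  have hD := IsDirectedSet.of_directedOn hne hC.directedOn
  obtain ⟨s, hs⟩ := hγ C hD
  by_cases hsc : IsCompactElem s
  · obtain ⟨c, hcC, hsc⟩ := hsc C hD s hs le_rfl
    exact ⟨c, fun d hd => (hs.1 hd).trans hsc, Or.inl hcC⟩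
  · exact ⟨s, hs.1, Or.inr hsc⟩

theorem IsAlgebraicOrder.exists_lt_not_isCompactElem
    (hγ : IsAlgebraicOrder γ) (hK : UpwardsComplete {x : γ // IsCompactElem x}) {a : γ}
    (ha : ¬ IsCompactElem a) : ∃ b : {x : γ // IsCompactElem x}, a < b ∧ ¬ IsCompactElem b := by
  obtain ⟨hdir, hlub⟩ := hγ.2 a
  set E : Set {x : γ // IsCompactElem x} := Subtype.val ⁻¹' {k | IsCompactElem k ∧ k ≤ a}
  have hE : IsDirectedSet E := hdir.preimage_val fun k hk => hk.1
  obtain ⟨b, hb⟩ := hK E hE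
  have hab : a ≤ b := hlub.2 fun k hk =>
    hb.1 (show (⟨k, hk.1⟩ : {x // IsCompactElem x}) ∈ E from hk)
  have hab' : a < b := lt_of_le_of_ne hab fun h => ha (h ▸ b.2)
  exact ⟨b, hab', not_isCompactElem_of_isLUB_s1 hE hb fun e he hbe =>
    (hab'.trans_le ((Subtype.coe_le_coe.2 hbe).trans he.2)).false⟩

end

namespace KIter

variable {α : Type u} [inst : PartialOrder α]

instance (n : ℕ) : PartialOrder (KIter α inst n).1 := (KIter α inst n).2

def embed : (n : ℕ) → (KIter α inst n).1 → α
  | 0, x => x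
  | n + 1, x => embed n x.1

theorem strictMono_embed : ∀ n : ℕ, StrictMono (embed (α := α) n)
  | 0 => strictMono_id
  | n + 1 => (strictMono_embed n).comp (Subtype.strictMono_coe _)

end KIter

theorem IterativelyAlgebraic.exists_lt_not_isCompactElem {α : Type u} [inst : PartialOrder α]
    (h : IterativelyAlgebraic α inst) {n : ℕ} {b : (KIter α inst n).1} (hb : ¬ IsCompactElem b) :
    ∃ b' : (KIter α inst (n + 1)).1,
      KIter.embed n b < KIter.embed (n + 1) b' ∧ ¬ IsCompactElem b' := by
  obtain ⟨b', hlt, hb'⟩ := (h n).exists_lt_not_isCompactElem (h (n + 1)).1 hb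
  exact ⟨b', KIter.strictMono_embed n hlt, hb'⟩

theorem IterativelyAlgebraic.isCompactElem {α : Type u} [inst : PartialOrder α]
    (h : IterativelyAlgebraic α inst) (a : α) : IsCompactElem a := by
  by_contra ha
  set G : Set α := {x | ∃ n, ∃ b : (KIter α inst n).1, ¬ IsCompactElem b ∧ KIter.embed n b = x}
  have hG : ∀ c ⊆ G, IsChain (· ≤ ·) c → ∀ y ∈ c, ∃ ub ∈ G, ∀ z ∈ c, z ≤ ub := by
    intro c hcG hc y hy
    obtain ⟨u, hu, huc | hu'⟩ := (h 0).1.exists_upperBound_of_isChain ⟨y, hy⟩ hc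
    exacts [⟨u, hcG huc, hu⟩, ⟨u, ⟨0, u, hu', rfl⟩, hu⟩]
  obtain ⟨m, -, ⟨n, b, hb, rfl⟩, hmax⟩ := zorn_le_nonempty₀ G hG a ⟨0, a, ha, rfl⟩
  obtain ⟨b', hlt, hb'⟩ := h.exists_lt_not_isCompactElem hb
  exact hlt.not_ge (hmax ⟨n + 1, b', hb', rfl⟩ hlt.le)

/-- An iteratively algebraic ordered set satisfies the ascending chain condition. -/
theorem iterativelyAlgebraic_acc {α : Type u} [inst : PartialOrder α]
    (h : IterativelyAlgebraic α inst) :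
    ¬ ∃ x : ℕ → α, ∀ n : ℕ, x n < x (n + 1) := by
  rintro ⟨x, hx⟩
  have hmono := strictMono_nat_of_lt_succ hx
  obtain ⟨u, hu, hmem | hu'⟩ := (h 0).1.exists_upperBound_of_isChain (Set.range_nonempty x)
    hmono.monotone.isChain_range
  · obtain ⟨n, rfl⟩ := hmem
    exact (hx n).not_ge (hu ⟨n + 1, rfl⟩)
  · exact hu' (h.isCompactElem u)
end

section
/- If a lattice L is isomorphic (as an ordered set) to its ideal lattice Idl(L), then every ideal of L is principal. -/
universe u


/-- An ideal of a lattice: a nonempty, downward-closed subset closed under binary joins. -/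
structure LatticeIdeal (L : Type u) [Lattice L] where
  carrier : Set L
  nonempty' : carrier.Nonempty
  mem_of_le : ∀ ⦃x y : L⦄, y ≤ x → x ∈ carrier → y ∈ carrier
  sup_mem : ∀ ⦃x y : L⦄, x ∈ carrier → y ∈ carrier → x ⊔ y ∈ carrier

/-- Ideals are ordered by inclusion. -/
instance {L : Type u} [Lattice L] : PartialOrder (LatticeIdeal L) where
  le I J := I.carrier ⊆ J.carrier
  le_refl I := subset_rfl
  le_trans I J K h h' := Set.Subset.trans h h'
  le_antisymm I J h h' := by
    cases I; cases J
    simp only [LatticeIdeal.mk.injEq]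
    exact Set.Subset.antisymm h h'

/-!
Transporting the principal ideals along `e` gives an order embedding `φ = shift e` of `L` into
itself with `z ∈ e x ↔ φ z ≤ x`, and the preimage under `φ` of a non-principal ideal is again
non-principal. For a non-principal ideal `M`, put `sₙ = e⁻¹ (φ⁻ⁿ M)`; then `sₙ < φ sₙ₊₁`, so
`φⁿ sₙ` is strictly increasing, and the ideals `e (φⁿ sₙ)` form a strictly increasing chain
starting at `M`. Its union is a non-principal ideal strictly larger than `M`, which is impossible
when `M` is a maximal non-principal ideal; one exists by Zorn's lemma.
-/

namespace LatticeIdeal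

variable {L : Type u} [Lattice L]

def principal (x : L) : LatticeIdeal L where
  carrier := Set.Iic x
  nonempty' := ⟨x, le_rfl⟩
  mem_of_le _ _ hyx hx := le_trans hyx hx
  sup_mem _ _ hx hy := sup_le hx hy

theorem principal_le_iff {x : L} {I : LatticeIdeal L} : principal x ≤ I ↔ x ∈ I.carrier :=
  ⟨fun h => h (le_refl x), fun hx _ hy => I.mem_of_le hy hx⟩

def principalEmbedding : L ↪o LatticeIdeal L :=
  OrderEmbedding.ofMapLEIff principal fun _ _ => principal_le_iff

def IsPrincipal (I : LatticeIdeal L) : Prop := ∃ x, I.carrier = Set.Iic x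

theorem isPrincipal_iff_exists_isGreatest {I : LatticeIdeal L} :
    IsPrincipal I ↔ ∃ x, IsGreatest I.carrier x := by
  refine exists_congr fun x => ⟨fun h => h ▸ isGreatest_Iic, fun h => ?_⟩
  exact Set.Subset.antisymm (fun y hy => h.2 hy) (fun y hy => I.mem_of_le hy h.1)

theorem ne_principal_of_not_isPrincipal {I : LatticeIdeal L} (h : ¬ IsPrincipal I) (x : L) :
    I ≠ principal x :=
  fun hx => h ⟨x, congrArg carrier hx⟩

section Chain

variable (c : Set (LatticeIdeal L)) (hc : IsChain (· ≤ ·) c) (hne : c.Nonempty)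

def sUnion : LatticeIdeal L where
  carrier := ⋃ I ∈ c, I.carrier
  nonempty' := by
    obtain ⟨I, hI⟩ := hne
    obtain ⟨y, hy⟩ := I.nonempty'
    exact ⟨y, Set.mem_biUnion hI hy⟩
  mem_of_le x y hyx hx := by
    obtain ⟨I, hI, hxI⟩ := Set.mem_iUnion₂.mp hx
    exact Set.mem_biUnion hI (I.mem_of_le hyx hxI)
  sup_mem x y hx hy := by
    obtain ⟨I, hI, hxI⟩ := Set.mem_iUnion₂.mp hx
    obtain ⟨J, hJ, hyJ⟩ := Set.mem_iUnion₂.mp hy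
    rcases hc.total hI hJ with hIJ | hJI
    · exact Set.mem_biUnion hJ (J.sup_mem (hIJ hxI) hyJ)
    · exact Set.mem_biUnion hI (I.sup_mem hxI (hJI hyJ))

theorem le_sUnion {I : LatticeIdeal L} (hI : I ∈ c) : I ≤ sUnion c hc hne :=
  fun _ hx => Set.mem_biUnion hI hx

theorem sUnion_mem_of_isPrincipal (h : IsPrincipal (sUnion c hc hne)) : sUnion c hc hne ∈ c := by
  obtain ⟨x, hx⟩ := h
  have hxU : x ∈ (sUnion c hc hne).carrier := hx ▸ Set.self_mem_Iic
  obtain ⟨I, hI, hxI⟩ := Set.mem_iUnion₂.mp hxU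
  have hle : sUnion c hc hne ≤ I := fun y hy => I.mem_of_le (show y ∈ Set.Iic x from hx ▸ hy) hxI
  exact le_antisymm hle (le_sUnion c hc hne hI) ▸ hI

end Chain

theorem exists_maximal_not_isPrincipal {I : LatticeIdeal L} (hI : ¬ IsPrincipal I) :
    ∃ M, I ≤ M ∧ Maximal (fun J => ¬ IsPrincipal J) M := by
  refine zorn_le_nonempty₀ _ (fun c hcs hc J hJ => ?_) I hI
  refine ⟨sUnion c hc ⟨J, hJ⟩, fun h => ?_, fun _ => le_sUnion c hc ⟨J, hJ⟩⟩
  exact hcs (sUnion_mem_of_isPrincipal c hc ⟨J, hJ⟩ h) h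

theorem exists_gt_not_isPrincipal_of_strictMono {I : ℕ → LatticeIdeal L} (hI : StrictMono I) :
    ∃ J, I 0 < J ∧ ¬ IsPrincipal J := by
  have hc : IsChain (· ≤ ·) (Set.range I) := hI.monotone.isChain_range
  have hne : (Set.range I).Nonempty := Set.range_nonempty I
  refine ⟨sUnion _ hc hne, (hI zero_lt_one).trans_le (le_sUnion _ hc hne ⟨1, rfl⟩), fun h => ?_⟩
  obtain ⟨n, hn⟩ := sUnion_mem_of_isPrincipal _ hc hne h
  exact (hI n.lt_succ_self).not_ge (hn ▸ le_sUnion _ hc hne ⟨n + 1, rfl⟩)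

section OrderIso

variable (e : L ≃o LatticeIdeal L)

def shift : L ↪o L := principalEmbedding.trans e.symm.toOrderEmbedding

theorem apply_shift (x : L) : e (shift e x) = principal x := e.apply_symm_apply _

theorem mem_apply_iff {x z : L} : z ∈ (e x).carrier ↔ shift e z ≤ x := by
  rw [← principal_le_iff, ← apply_shift, e.le_iff_le]

theorem shift_sup_le (a b : L) : shift e (a ⊔ b) ≤ shift e a ⊔ shift e b := by
  rw [← mem_apply_iff]
  exact (e _).sup_mem ((mem_apply_iff e).mpr le_sup_left) ((mem_apply_iff e).mpr le_sup_right)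

def preimage (I : LatticeIdeal L) : LatticeIdeal L where
  carrier := shift e ⁻¹' I.carrier
  nonempty' := by
    obtain ⟨y, hy⟩ := I.nonempty'
    obtain ⟨z, hz⟩ := (e y).nonempty'
    exact ⟨z, I.mem_of_le ((mem_apply_iff e).mp hz) hy⟩
  mem_of_le _ _ hyx hx := I.mem_of_le ((shift e).monotone hyx) hx
  sup_mem a b ha hb := I.mem_of_le (shift_sup_le e a b) (I.sup_mem ha hb)

theorem le_symm_preimage {I : LatticeIdeal L} {z : L} (hz : z ∈ I.carrier) :
    z ≤ e.symm (preimage e I) := by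
  rw [← e.le_iff_le, e.apply_symm_apply]
  exact fun y hy => I.mem_of_le ((mem_apply_iff e).mp hy) hz

theorem not_isPrincipal_preimage {I : LatticeIdeal L} (hI : ¬ IsPrincipal I) :
    ¬ IsPrincipal (preimage e I) := by
  simp only [isPrincipal_iff_exists_isGreatest, not_exists] at hI ⊢
  refine fun c hc => hI (shift e c) ⟨hc.1, fun z hz => ?_⟩
  rw [← e.le_iff_le, apply_shift]
  exact fun y hy => hc.2 (I.mem_of_le ((mem_apply_iff e).mp hy) hz)

/-- `e.symm (preimage e I)` is the supremum of `I`; under `e` this reads `I < principal (sup I)`. -/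
theorem symm_lt_shift_symm_preimage {I : LatticeIdeal L} (hI : ¬ IsPrincipal I) :
    e.symm I < shift e (e.symm (preimage e I)) := by
  rw [← e.lt_iff_lt, e.apply_symm_apply, apply_shift]
  exact lt_of_le_of_ne (fun z hz => le_symm_preimage e hz) (ne_principal_of_not_isPrincipal hI _)

theorem exists_strictMono_of_not_isPrincipal {M : LatticeIdeal L} (hM : ¬ IsPrincipal M) :
    ∃ v : ℕ → L, StrictMono v ∧ e (v 0) = M := by
  set s : ℕ → L := fun n => e.symm ((preimage e)^[n] M)
  have hs : ∀ n, s n < shift e (s (n + 1)) := fun n => by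
    have hn : ¬ IsPrincipal ((preimage e)^[n] M) :=
      Function.Iterate.rec (fun J => ¬ IsPrincipal J) hM (fun _ => not_isPrincipal_preimage e) n
    simpa only [s, Function.iterate_succ_apply'] using symm_lt_shift_symm_preimage e hn
  refine ⟨fun n => (shift e)^[n] (s n), strictMono_nat_of_lt_succ fun n => ?_, e.apply_symm_apply M⟩
  rw [Function.iterate_succ_apply]
  exact (shift e).strictMono.iterate n (hs n)

end OrderIso

end LatticeIdeal

/-- If a lattice is order-isomorphic to its ideal lattice, every ideal is principal. -/
theorem ideal_principal_of_orderIso_idealLattice {L : Type u} [Lattice L]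
    (e : L ≃o LatticeIdeal L) :
    ∀ I : LatticeIdeal L, ∃ x : L, I.carrier = {y : L | y ≤ x} := by
  intro I
  by_contra hI
  obtain ⟨M, -, hM⟩ := LatticeIdeal.exists_maximal_not_isPrincipal hI
  obtain ⟨v, hv, hv0⟩ := LatticeIdeal.exists_strictMono_of_not_isPrincipal e hM.prop
  obtain ⟨J, hMJ, hJ⟩ :=
    LatticeIdeal.exists_gt_not_isPrincipal_of_strictMono (e.strictMono.comp hv)
  rw [Function.comp_apply, hv0] at hMJ
  exact hMJ.not_ge (hM.2 hJ hMJ.le)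
end

section
/- If a lattice L is isomorphic (as an ordered set) to its ideal lattice Idl(L), then L is iteratively algebraic: Kⁿ(L) is algebraic for every natural number n. -/
universe u

/-!
The compact elements of `Idl L` are exactly the principal ideals `↓a`, and `Idl L` is algebraic:
directed unions of ideals are ideals, and every ideal is the directed union of the principal
ideals it contains. So `a ↦ ↓a` identifies `L` with `K(Idl L)`, and an isomorphism `L ≅ Idl L`
yields `L ≅ K(L)` together with algebraicity of `L`. Both transfer along order isomorphisms, and
`K` carries isomorphisms to isomorphisms, so by induction every `Kⁿ(L)` is isomorphic to `L`.
-/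

section Transfer

variable {α β : Type u} [PartialOrder α] [PartialOrder β]

lemma isDirectedSet_iff {X : Set α} :
    IsDirectedSet X ↔ X.Nonempty ∧ DirectedOn (· ≤ ·) X := by
  classical
  refine ⟨fun h => ⟨?_, fun a ha b hb => ?_⟩, fun ⟨⟨x, hx⟩, hd⟩ F hF => ?_⟩
  · obtain ⟨z, hz, -⟩ := h ∅ (by simp)
    exact ⟨z, hz⟩
  · obtain ⟨z, hz, hle⟩ := h {a, b} (by simp [Set.insert_subset_iff, ha, hb])
    exact ⟨z, hz, hle a (by simp), hle b (by simp)⟩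
  · have : Nonempty X := ⟨⟨x, hx⟩⟩
    obtain ⟨z, hz⟩ := hd.directed_val.finset_le (F.subtype (· ∈ X))
    exact ⟨z, z.2, fun y hy => hz ⟨y, hF hy⟩ (by simpa using hy)⟩

lemma IsDirectedSet.image {f : α → β} (hf : Monotone f) {X : Set α} (h : IsDirectedSet X) :
    IsDirectedSet (f '' X) := by
  obtain ⟨hne, hd⟩ := isDirectedSet_iff.1 h
  exact isDirectedSet_iff.2 ⟨hne.image f, directedOn_image.2 (hd.mono fun _ _ hab => hf hab)⟩

lemma IsDirectedSet.preimage (f : α ≃o β) {Y : Set β} (h : IsDirectedSet Y) :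
    IsDirectedSet (f ⁻¹' Y) := by
  simpa [f.symm.image_eq_preimage_symm] using h.image f.symm.monotone

lemma IsCompactElem.map (f : α ≃o β) {x : α} (h : IsCompactElem x) :
    IsCompactElem (f x) := by
  intro Y hY s hs hxs
  obtain ⟨y, hy, hxy⟩ :=
    h _ (hY.preimage f) _ (f.isLUB_preimage'.2 hs) (f.le_symm_apply.2 hxs)
  exact ⟨f y, hy, f.monotone hxy⟩

lemma OrderIso.isCompactElem_iff (f : α ≃o β) {x : α} :
    IsCompactElem (f x) ↔ IsCompactElem x :=
  ⟨fun h => by simpa using h.map f.symm, IsCompactElem.map f⟩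

lemma OrderIso.image_compactsBelow (f : α ≃o β) (x : α) :
    f '' {k | IsCompactElem k ∧ k ≤ x} = {k | IsCompactElem k ∧ k ≤ f x} := by
  ext k
  obtain ⟨k, rfl⟩ := f.surjective k
  simp [f.injective.mem_set_image, f.isCompactElem_iff]

lemma UpwardsComplete.map (f : α ≃o β) (h : UpwardsComplete α) : UpwardsComplete β := by
  intro Y hY
  obtain ⟨s, hs⟩ := h _ (hY.preimage f)
  exact ⟨f s, f.isLUB_preimage.1 hs⟩

lemma IsAlgebraicOrder.map (f : α ≃o β) (h : IsAlgebraicOrder α) : IsAlgebraicOrder β := by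
  refine ⟨h.1.map f, fun y => ?_⟩
  obtain ⟨hd, hl⟩ := h.2 (f.symm y)
  rw [← f.apply_symm_apply y, ← f.image_compactsBelow]
  exact ⟨hd.image f.monotone, f.isLUB_image'.2 hl⟩

def OrderIso.compactRestrict (f : α ≃o β) :
    {x : α // IsCompactElem x} ≃o {y : β // IsCompactElem y} where
  toFun x := ⟨f x, x.2.map f⟩
  invFun y := ⟨f.symm y, y.2.map f.symm⟩
  left_inv x := by simp
  right_inv y := by simp
  map_rel_iff' := f.le_iff_le

end Transfer

lemma iterativelyAlgebraic_of_orderIso_compacts {α : Type u} [inst : PartialOrder α]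
    (hα : IsAlgebraicOrder α) (g : α ≃o {x : α // IsCompactElem x}) :
    IterativelyAlgebraic α inst := by
  have key : ∀ n, letI := (KIter α inst n).2; Nonempty (α ≃o (KIter α inst n).1) := by
    intro n
    induction n with
    | zero => exact ⟨OrderIso.refl α⟩
    | succ n ih =>
      let _ := (KIter α inst n).2
      obtain ⟨f⟩ := ih
      show Nonempty (α ≃o {x : (KIter α inst n).1 // IsCompactElem x})
      exact ⟨g.trans f.compactRestrict⟩
  intro n
  let _ := (KIter α inst n).2
  obtain ⟨f⟩ := key n
  exact hα.map f

section Ideals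

variable {L : Type u} [Lattice L]

def principalIdeal (a : L) : LatticeIdeal L where
  carrier := Set.Iic a
  nonempty' := Set.nonempty_Iic
  mem_of_le _ _ hyx hx := hyx.trans hx
  sup_mem _ _ hx hy := sup_le hx hy

lemma principalIdeal_le_iff {a : L} {I : LatticeIdeal L} :
    principalIdeal a ≤ I ↔ a ∈ I.carrier :=
  ⟨fun h => h le_rfl, fun h _ hx => I.mem_of_le hx h⟩

lemma principalIdeal_le_principalIdeal_iff {a b : L} :
    principalIdeal a ≤ principalIdeal b ↔ a ≤ b :=
  principalIdeal_le_iff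

lemma principalIdeal_mono : Monotone (principalIdeal : L → LatticeIdeal L) :=
  fun _ _ => principalIdeal_le_principalIdeal_iff.2

lemma isDirectedSet_carrier (I : LatticeIdeal L) : IsDirectedSet I.carrier :=
  isDirectedSet_iff.2 ⟨I.nonempty', SupClosed.directedOn fun _ ha _ hb => I.sup_mem ha hb⟩

def directedUnion (X : Set (LatticeIdeal L)) (hX : IsDirectedSet X) : LatticeIdeal L where
  carrier := ⋃ I ∈ X, I.carrier
  nonempty' := by
    obtain ⟨⟨I, hI⟩, -⟩ := isDirectedSet_iff.1 hX
    obtain ⟨a, ha⟩ := I.nonempty'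
    exact ⟨a, Set.mem_biUnion hI ha⟩
  mem_of_le _ _ hyx hx := by
    obtain ⟨I, hI, hxI⟩ := Set.mem_iUnion₂.1 hx
    exact Set.mem_biUnion hI (I.mem_of_le hyx hxI)
  sup_mem _ _ hx hy := by
    obtain ⟨I, hI, hxI⟩ := Set.mem_iUnion₂.1 hx
    obtain ⟨J, hJ, hyJ⟩ := Set.mem_iUnion₂.1 hy
    obtain ⟨K, hK, hIK, hJK⟩ := (isDirectedSet_iff.1 hX).2 I hI J hJ
    exact Set.mem_biUnion hK (K.sup_mem (hIK hxI) (hJK hyJ))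

lemma isLUB_directedUnion (X : Set (LatticeIdeal L)) (hX : IsDirectedSet X) :
    IsLUB X (directedUnion X hX) :=
  ⟨fun _ hI _ hx => Set.mem_biUnion hI hx,
    fun _ hJ _ hx => by
      obtain ⟨I, hI, hxI⟩ := Set.mem_iUnion₂.1 hx
      exact hJ hI hxI⟩

lemma upwardsComplete_latticeIdeal : UpwardsComplete (LatticeIdeal L) :=
  fun X hX => ⟨directedUnion X hX, isLUB_directedUnion X hX⟩

lemma isCompactElem_principalIdeal (a : L) : IsCompactElem (principalIdeal a) := by
  intro X hX s hs has
  rw [hs.unique (isLUB_directedUnion X hX), principalIdeal_le_iff] at has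
  obtain ⟨I, hI, haI⟩ := Set.mem_iUnion₂.1 has
  exact ⟨I, hI, principalIdeal_le_iff.2 haI⟩

lemma isLUB_principalIdeal_image (I : LatticeIdeal L) :
    IsLUB (principalIdeal '' I.carrier) I :=
  ⟨by
    rintro _ ⟨a, ha, rfl⟩
    exact principalIdeal_le_iff.2 ha,
    fun J hJ a ha => principalIdeal_le_iff.1 (hJ ⟨a, ha, rfl⟩)⟩

lemma exists_eq_principalIdeal_of_isCompactElem {I : LatticeIdeal L} (h : IsCompactElem I) :
    ∃ a ∈ I.carrier, I = principalIdeal a := by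
  obtain ⟨_, ⟨a, ha, rfl⟩, hIa⟩ := h _
    ((isDirectedSet_carrier I).image principalIdeal_mono)
    I (isLUB_principalIdeal_image I) le_rfl
  exact ⟨a, ha, le_antisymm hIa (principalIdeal_le_iff.2 ha)⟩

lemma compactsBelow_eq_image_principalIdeal (I : LatticeIdeal L) :
    {K | IsCompactElem K ∧ K ≤ I} = principalIdeal '' I.carrier := by
  ext K
  constructor
  · rintro ⟨hK, hKI⟩
    obtain ⟨a, ha, rfl⟩ := exists_eq_principalIdeal_of_isCompactElem hK
    exact ⟨a, principalIdeal_le_iff.1 hKI, rfl⟩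
  · rintro ⟨a, ha, rfl⟩
    exact ⟨isCompactElem_principalIdeal a, principalIdeal_le_iff.2 ha⟩

lemma isAlgebraicOrder_latticeIdeal : IsAlgebraicOrder (LatticeIdeal L) := by
  refine ⟨upwardsComplete_latticeIdeal, fun I => ?_⟩
  rw [compactsBelow_eq_image_principalIdeal]
  exact ⟨(isDirectedSet_carrier I).image principalIdeal_mono, isLUB_principalIdeal_image I⟩

noncomputable def principalIdealOrderIso :
    L ≃o {I : LatticeIdeal L // IsCompactElem I} :=
  OrderIso.ofSurjective
    (OrderEmbedding.ofMapLEIff (fun a => ⟨principalIdeal a, isCompactElem_principalIdeal a⟩)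
      fun _ _ => principalIdeal_le_principalIdeal_iff)
    fun ⟨_, hI⟩ => by
      obtain ⟨a, -, rfl⟩ := exists_eq_principalIdeal_of_isCompactElem hI
      exact ⟨a, rfl⟩

end Ideals

/-- If a lattice is order-isomorphic to its ideal lattice, it is iteratively algebraic. -/
theorem iterativelyAlgebraic_of_orderIso_idealLattice {L : Type u} [Lattice L]
    (e : L ≃o LatticeIdeal L) :
    IterativelyAlgebraic L inferInstance :=
  iterativelyAlgebraic_of_orderIso_compacts (isAlgebraicOrder_latticeIdeal.map e.symm)
    (principalIdealOrderIso.trans e.symm.compactRestrict)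
end
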